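/- Fix α ≤ 1/2 and b > 0. Among the tests φ_{θ₀,p} for p ∈ [1, ∞], the minimax power β_{θ₀,p}(b) = 1 - Φ(c_{p,α} - b) is strictly increasing in p; in particular the sup-statistic test φ_{θ₀,∞} has strictly greater minimax power than φ_{θ₀,p} for every p < ∞ (when k ≥ 2). -/

import Mathlib

open MeasureTheory ProbabilityTheory
open scoped ENNReal NNReal

/-- The law of `Z ~ N(μ, I_k)`: product of one-dimensional Gaussians. -/
noncomputable def gaussPi (k : ℕ) (μ : Fin k → ℝ) : Measure (Fin k → ℝ) :=
  Measure.pi (fun j => gaussianReal (μ j) 1)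

/-- `θ̄(μ) = min_j μ(j)`. -/
noncomputable def thetaBar {k : ℕ} (μ : Fin k → ℝ) : ℝ := ⨅ j, μ j

/-- The `τ`-quantile of the statistic `S` under the measure `P`. -/
noncomputable def quantile {k : ℕ} (P : Measure (Fin k → ℝ)) (S : (Fin k → ℝ) → ℝ)
    (τ : ℝ) : ℝ :=
  sInf (setOf (fun t : ℝ => τ ≤ (P (setOf (fun z => S z ≤ t))).toReal))

/-- One-sided `L^p` statistic `S_p(z, θ₀)`, `p ∈ [1, ∞]` (`p = ∞` gives the max statistic). -/
noncomputable def SpE (k : ℕ) (p : ℝ≥0∞) (z : Fin k → ℝ) (θ : ℝ) : ℝ :=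
  if p = ∞ then ⨆ j, max (θ - z j) 0
  else (∑ j, (max (θ - z j) 0) ^ p.toReal) ^ (1 / p.toReal)

/-- Standard normal cdf `Φ`. -/
noncomputable def Phi (x : ℝ) : ℝ := (gaussianReal 0 1 (Set.Iic x)).toReal

lemma gr_null (x : ℝ) : gaussianReal 0 1 {x} = 0 :=
  gaussianReal_absolutelyContinuous 0 one_ne_zero (Real.volume_singleton)

lemma gr_pos {s : Set ℝ} (hs : volume s ≠ 0) : gaussianReal 0 1 s ≠ 0 :=
  fun h0 => hs (gaussianReal_absolutelyContinuous' 0 one_ne_zero h0)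

lemma gr_Ioo_pos {x y : ℝ} (h : x < y) : gaussianReal 0 1 (Set.Ioo x y) ≠ 0 := by
  apply gr_pos
  rw [Real.volume_Ioo]
  exact (ENNReal.ofReal_pos.2 (by linarith)).ne'

lemma Phi_strictMono : StrictMono Phi := by
  intro x y hxy
  have hsplit : Set.Iic y = Set.Iic x ∪ Set.Ioc x y := (Set.Iic_union_Ioc_eq_Iic hxy.le).symm
  have hdisj : Disjoint (Set.Iic x) (Set.Ioc x y) := by
    exact Set.Iic_disjoint_Ioc le_rfl
  have hIoc : gaussianReal 0 1 (Set.Ioc x y) ≠ 0 := by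
    apply gr_pos
    rw [Real.volume_Ioc]
    exact (ENNReal.ofReal_pos.2 (by linarith)).ne'
  have hys : Phi y = Phi x + (gaussianReal 0 1 (Set.Ioc x y)).toReal := by
    rw [Phi, hsplit, measure_union hdisj measurableSet_Ioc,
      ENNReal.toReal_add (measure_ne_top _ _) (measure_ne_top _ _)]
    rfl
  rw [hys]
  have : 0 < (gaussianReal 0 1 (Set.Ioc x y)).toReal :=
    ENNReal.toReal_pos hIoc (measure_ne_top _ _)
  linarith

lemma gr_Ici_half : gaussianReal 0 1 (Set.Ici (0:ℝ)) = 1/2 := by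
  have hmap : (gaussianReal 0 1).map (fun x : ℝ => (-1) * x) = gaussianReal 0 1 := by
    rw [gaussianReal_map_const_mul (-1)]
    congr 1
    · ring
    · ext; norm_num
  have h1 : gaussianReal 0 1 (Set.Ici (0:ℝ)) = gaussianReal 0 1 (Set.Iic (0:ℝ)) := by
    conv_lhs => rw [← hmap]
    rw [Measure.map_apply (by fun_prop) measurableSet_Ici]
    congr 1
    ext z
    simp
  have h2 : gaussianReal 0 1 (Set.Iic (0:ℝ)) = gaussianReal 0 1 (Set.Iio (0:ℝ)) := by
    have : Set.Iic (0:ℝ) = Set.Iio 0 ∪ {0} := by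
      ext x; simp [le_iff_lt_or_eq]
    rw [this, measure_union (by simp) (measurableSet_singleton _), gr_null, add_zero]
  have h3 : gaussianReal 0 1 (Set.Ici (0:ℝ)) + gaussianReal 0 1 (Set.Iio (0:ℝ)) = 1 := by
    rw [← measure_union (by simp [Set.disjoint_left]) measurableSet_Iio]
    rw [Set.union_comm, Set.Iio_union_Ici]
    simp
  rw [h1, h2] at h3
  have h2ne : (2:ℝ≥0∞) ≠ 0 := by norm_num
  have h2net : (2:ℝ≥0∞) ≠ ⊤ := by norm_num
  rw [ENNReal.eq_div_iff h2ne h2net, two_mul]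
  rw [h1, h2]
  exact h3

lemma SpE_inf {k : ℕ} (z : Fin k → ℝ) : SpE k ∞ z 0 = ⨆ j, max (0 - z j) 0 := by
  simp [SpE]

lemma SpE_fin {k : ℕ} {p : ℝ≥0∞} (hp : p ≠ ∞) (z : Fin k → ℝ) :
    SpE k p z 0 = (∑ j, max (0 - z j) 0 ^ p.toReal) ^ (1 / p.toReal) := by
  simp [SpE, hp]

lemma maxnn (x : ℝ) : 0 ≤ max (0 - x) 0 := le_max_right _ _

lemma toReal_ge_one {p : ℝ≥0∞} (hp : 1 ≤ p) (hp' : p ≠ ∞) : 1 ≤ p.toReal := by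
  have := ENNReal.toReal_mono hp' hp
  simpa using this

lemma sum_pow_nonneg {k : ℕ} (z : Fin k → ℝ) (r : ℝ) :
    0 ≤ ∑ j, max (0 - z j) 0 ^ r :=
  Finset.sum_nonneg fun j _ => Real.rpow_nonneg (maxnn _) _

lemma SpE_nonneg {k : ℕ} (p : ℝ≥0∞) (z : Fin k → ℝ) : 0 ≤ SpE k p z 0 := by
  by_cases hp : p = ∞
  · subst hp; rw [SpE_inf]
    exact Real.iSup_nonneg fun j => maxnn _
  · rw [SpE_fin hp]
    exact Real.rpow_nonneg (sum_pow_nonneg z _) _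

/-- each coordinate is at most the p-norm -/
lemma coord_le_SpE {k : ℕ} {p : ℝ≥0∞} (hp : 1 ≤ p) (hp' : p ≠ ∞) (z : Fin k → ℝ) (j : Fin k) :
    max (0 - z j) 0 ≤ SpE k p z 0 := by
  have hpt : 0 < p.toReal := lt_of_lt_of_le one_pos (toReal_ge_one hp hp')
  rw [SpE_fin hp' z]
  have h1 : max (0 - z j) 0 = (max (0 - z j) 0 ^ p.toReal) ^ (1 / p.toReal) := by
    rw [one_div, Real.rpow_rpow_inv (maxnn _) hpt.ne']
  rw [h1]
  apply Real.rpow_le_rpow (Real.rpow_nonneg (maxnn _) _) _ (by positivity)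
  exact Finset.single_le_sum (fun i _ => Real.rpow_nonneg (maxnn _) _) (Finset.mem_univ j)

lemma SpE_anti {k : ℕ} [Nonempty (Fin k)] {p q : ℝ≥0∞} (hp : 1 ≤ p) (hpq : p < q)
    (z : Fin k → ℝ) : SpE k q z 0 ≤ SpE k p z 0 := by
  have hp' : p ≠ ∞ := hpq.ne_top
  have hpt : 0 < p.toReal := lt_of_lt_of_le one_pos (toReal_ge_one hp hp')
  by_cases hq : q = ∞
  · subst hq
    rw [SpE_inf]
    exact ciSup_le fun j => coord_le_SpE hp hp' z j
  · have hqt : p.toReal < q.toReal :=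
      (ENNReal.toReal_lt_toReal hp' hq).2 hpq
    set A := SpE k p z 0 with hA
    have hAnn : 0 ≤ A := SpE_nonneg p z
    have hApow : A ^ p.toReal = ∑ j, max (0 - z j) 0 ^ p.toReal := by
      rw [hA, SpE_fin hp', one_div, Real.rpow_inv_rpow (sum_pow_nonneg z _) hpt.ne']
    have key : ∑ j, max (0 - z j) 0 ^ q.toReal ≤ A ^ q.toReal := by
      have step : ∀ j : Fin k, max (0 - z j) 0 ^ q.toReal
          ≤ A ^ (q.toReal - p.toReal) * max (0 - z j) 0 ^ p.toReal := by
        intro j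
        have hsplit : max (0 - z j) 0 ^ q.toReal
            = max (0 - z j) 0 ^ (q.toReal - p.toReal) * max (0 - z j) 0 ^ p.toReal := by
          rw [← Real.rpow_add' (maxnn _) (by simp; linarith)]
          ring_nf
        rw [hsplit]
        apply mul_le_mul_of_nonneg_right _ (Real.rpow_nonneg (maxnn _) _)
        exact Real.rpow_le_rpow (maxnn _) (coord_le_SpE hp hp' z j) (by linarith)
      calc ∑ j, max (0 - z j) 0 ^ q.toReal
          ≤ ∑ j, A ^ (q.toReal - p.toReal) * max (0 - z j) 0 ^ p.toReal :=
            Finset.sum_le_sum fun j _ => step j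
        _ = A ^ (q.toReal - p.toReal) * ∑ j, max (0 - z j) 0 ^ p.toReal := by
            rw [Finset.mul_sum]
        _ = A ^ (q.toReal - p.toReal) * A ^ p.toReal := by rw [hApow]
        _ = A ^ q.toReal := by
            rw [← Real.rpow_add' hAnn (by simp; linarith)]
            ring_nf
    have hqt0 : 0 < q.toReal := lt_trans hpt hqt
    rw [SpE_fin hq]
    calc (∑ j, max (0 - z j) 0 ^ q.toReal) ^ (1 / q.toReal)
        ≤ (A ^ q.toReal) ^ (1 / q.toReal) :=
          Real.rpow_le_rpow (sum_pow_nonneg z _) key (by positivity)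
      _ = A := by rw [one_div, Real.rpow_rpow_inv hAnn hqt0.ne']

noncomputable def Kfac (k : ℕ) (p : ℝ≥0∞) : ℝ :=
  if p = ∞ then 1 else (k:ℝ) ^ (1 / p.toReal)

lemma Kfac_pos {k : ℕ} (hk : 0 < k) (p : ℝ≥0∞) : 0 < Kfac k p := by
  rw [Kfac]
  split
  · norm_num
  · exact Real.rpow_pos_of_pos (by exact_mod_cast hk) _

lemma Kfac_lt {k : ℕ} (hk : 2 ≤ k) {p q : ℝ≥0∞} (hp : 1 ≤ p) (hpq : p < q) :
    Kfac k q < Kfac k p := by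
  have hp' : p ≠ ∞ := hpq.ne_top
  have hpt : 0 < p.toReal := lt_of_lt_of_le one_pos (toReal_ge_one hp hp')
  have hk1 : (1:ℝ) < (k:ℝ) := by exact_mod_cast hk.trans_lt' one_lt_two
  rw [Kfac, Kfac, if_neg hp']
  by_cases hq : q = ∞
  · rw [if_pos hq]
    rw [show (1:ℝ) = (k:ℝ) ^ (0:ℝ) by simp]
    exact Real.rpow_lt_rpow_of_exponent_lt hk1 (by positivity)
  · rw [if_neg hq]
    have hqt : p.toReal < q.toReal := (ENNReal.toReal_lt_toReal hp' hq).2 hpq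
    exact Real.rpow_lt_rpow_of_exponent_lt hk1 (by
      apply one_div_lt_one_div_of_lt hpt hqt)

lemma SpE_le_mul {k : ℕ} [Nonempty (Fin k)] {p : ℝ≥0∞} (hp : 1 ≤ p) {M : ℝ} (hM : 0 ≤ M)
    {z : Fin k → ℝ} (h : ∀ j, max (0 - z j) 0 ≤ M) : SpE k p z 0 ≤ M * Kfac k p := by
  by_cases hp' : p = ∞
  · subst hp'
    rw [SpE_inf, Kfac, if_pos rfl, mul_one]
    exact ciSup_le h
  · have hpt : 0 < p.toReal := lt_of_lt_of_le one_pos (toReal_ge_one hp hp')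
    rw [SpE_fin hp', Kfac, if_neg hp']
    have hbound : ∑ j, max (0 - z j) 0 ^ p.toReal ≤ (k:ℝ) * M ^ p.toReal := by
      calc ∑ j, max (0 - z j) 0 ^ p.toReal ≤ ∑ _j : Fin k, M ^ p.toReal :=
            Finset.sum_le_sum fun j _ => Real.rpow_le_rpow (maxnn _) (h j) hpt.le
        _ = (k:ℝ) * M ^ p.toReal := by simp [mul_comm]
    have heq : ((k:ℝ) * M ^ p.toReal) ^ (1 / p.toReal) = M * (k:ℝ) ^ (1 / p.toReal) := by
      rw [Real.mul_rpow (by positivity) (Real.rpow_nonneg hM _), one_div,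
        Real.rpow_rpow_inv hM hpt.ne']
      ring
    rw [← heq]
    exact Real.rpow_le_rpow (sum_pow_nonneg z _) hbound (by positivity)

lemma SpE_gt_mul {k : ℕ} [Nonempty (Fin k)] {p : ℝ≥0∞} (hp : 1 ≤ p) (hp' : p ≠ ∞) {m0 : ℝ}
    (hm : 0 ≤ m0) {z : Fin k → ℝ} (h : ∀ j, m0 < max (0 - z j) 0) :
    m0 * Kfac k p < SpE k p z 0 := by
  have hpt : 0 < p.toReal := lt_of_lt_of_le one_pos (toReal_ge_one hp hp')
  rw [SpE_fin hp', Kfac, if_neg hp']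
  have hbound : (k:ℝ) * m0 ^ p.toReal < ∑ j, max (0 - z j) 0 ^ p.toReal := by
    have : ∑ _j : Fin k, m0 ^ p.toReal < ∑ j, max (0 - z j) 0 ^ p.toReal :=
      Finset.sum_lt_sum_of_nonempty Finset.univ_nonempty
        (fun j _ => Real.rpow_lt_rpow hm (h j) hpt)
    simpa [mul_comm] using this
  have heq : ((k:ℝ) * m0 ^ p.toReal) ^ (1 / p.toReal) = m0 * (k:ℝ) ^ (1 / p.toReal) := by
    rw [Real.mul_rpow (by positivity) (Real.rpow_nonneg hm _), one_div,
      Real.rpow_rpow_inv hm hpt.ne']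
    ring
  rw [← heq]
  exact Real.rpow_lt_rpow (by positivity) hbound (by positivity)

lemma SpE_le_zero_iff {k : ℕ} [Nonempty (Fin k)] {p : ℝ≥0∞} (hp : 1 ≤ p) (z : Fin k → ℝ) :
    SpE k p z 0 ≤ 0 ↔ ∀ j, 0 ≤ z j := by
  by_cases hp' : p = ∞
  · subst hp'
    rw [SpE_inf]
    rw [ciSup_le_iff (Set.Finite.bddAbove (Set.finite_range _))]
    apply forall_congr'
    intro j
    constructor
    · intro hj
      have := le_antisymm hj (maxnn _)
      have h2 : 0 - z j ≤ 0 := by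
        by_contra hcon
        push_neg at hcon
        rw [max_eq_left hcon.le] at this
        linarith
      linarith
    · intro hj
      have : 0 - z j ≤ 0 := by linarith
      simp only [max_le_iff, le_refl, and_true, sub_nonpos]
      linarith
  · have hpt : 0 < p.toReal := lt_of_lt_of_le one_pos (toReal_ge_one hp hp')
    rw [SpE_fin hp']
    constructor
    · intro hle
      have hz : (∑ j, max (0 - z j) 0 ^ p.toReal) ^ (1 / p.toReal) = 0 :=
        le_antisymm hle (Real.rpow_nonneg (sum_pow_nonneg z _) _)
      rw [Real.rpow_eq_zero (sum_pow_nonneg z _) (by positivity)] at hz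
      have hall := (Finset.sum_eq_zero_iff_of_nonneg
        (fun j _ => Real.rpow_nonneg (maxnn _) _)).1 hz
      intro j
      have := hall j (Finset.mem_univ j)
      rw [Real.rpow_eq_zero (maxnn _) hpt.ne'] at this
      have h2 : 0 - z j ≤ 0 := by
        by_contra hcon
        push_neg at hcon
        rw [max_eq_left hcon.le] at this
        linarith
      linarith
    · intro hz
      have : ∀ j ∈ Finset.univ, max (0 - z j) 0 ^ p.toReal = 0 := by
        intro j _
        rw [Real.rpow_eq_zero (maxnn _) hpt.ne']
        have : 0 - z j ≤ 0 := by have := hz j; linarith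
        rw [max_eq_right this]
      rw [Finset.sum_eq_zero this, Real.zero_rpow (by positivity)]

lemma gcont {r : ℝ} (hr : 0 ≤ r) : Continuous fun x : ℝ => max (0 - x) 0 ^ r :=
  (Real.continuous_rpow_const hr).comp ((continuous_const.sub continuous_id).max continuous_const)

lemma g_levelset_null {r : ℝ} (hr : 0 < r) {s : ℝ} (hs : s ≠ 0) :
    gaussianReal 0 1 {x : ℝ | max (0 - x) 0 ^ r = s} = 0 := by
  rcases hs.lt_or_gt with hneg | hpos
  · convert measure_empty (μ := gaussianReal 0 1)
    ext x
    simp only [Set.mem_setOf_eq, Set.mem_empty_iff_false, iff_false]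
    intro h
    have := Real.rpow_nonneg (le_max_right (0 - x) 0) r
    linarith [h ▸ this]
  · refine measure_mono_null ?_ (gr_null (-(s ^ r⁻¹)))
    · intro x hx
      simp only [Set.mem_setOf_eq] at hx
      have hm : max (0 - x) 0 ≠ 0 := by
        intro h0
        rw [h0, Real.zero_rpow hr.ne'] at hx
        exact hs hx.symm
      have hpos' : 0 < 0 - x := by
        rcases le_or_gt (0 - x) 0 with h | h
        · exact absurd (max_eq_right h) hm
        · exact h
      rw [max_eq_left hpos'.le] at hx
      have : 0 - x = s ^ r⁻¹ := by
        rw [← hx, Real.rpow_rpow_inv hpos'.le hr.ne']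
      simp only [Set.mem_singleton_iff]
      linarith

lemma sumNull {r : ℝ} (hr : 0 < r) :
    ∀ (n : ℕ) (a : ℝ), a ≠ 0 →
      Measure.pi (fun _ : Fin n => gaussianReal 0 1) {z | ∑ j, max (0 - z j) 0 ^ r = a} = 0 := by
  intro n
  induction n with
  | zero =>
    intro a ha
    convert measure_empty (μ := Measure.pi (fun _ : Fin 0 => gaussianReal 0 1))
    ext z
    simp [Finset.sum_empty, Ne.symm ha]
  | succ n ih =>
    intro a ha
    set m := gaussianReal 0 1 with hm
    set e := MeasurableEquiv.piFinSuccAbove (fun _ : Fin (n+1) => ℝ) 0 with he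
    have hmp := measurePreserving_piFinSuccAbove (fun _ : Fin (n+1) => m) 0
    set E := {z : Fin (n+1) → ℝ | ∑ j, max (0 - z j) 0 ^ r = a} with hE
    have hEm : MeasurableSet E := by
      have hc : Continuous fun z : Fin (n+1) → ℝ => ∑ j, max (0 - z j) 0 ^ r :=
        continuous_finset_sum _ fun j _ => (gcont hr.le).comp (continuous_apply j)
      exact hc.measurable (measurableSet_singleton a)
    have key : Measure.pi (fun _ : Fin (n+1) => m) E
        = (m.prod (Measure.pi fun _ : Fin n => m)) (e.symm ⁻¹' E) := by
      have := (hmp.symm e).measure_preimage hEm.nullMeasurableSet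
      exact this.symm
    rw [key, Measure.prod_apply (e.symm.measurable hEm)]
    have hsec : ∀ x : ℝ, (Measure.pi fun _ : Fin n => m) (Prod.mk x ⁻¹' (e.symm ⁻¹' E))
        ≤ Set.indicator {x' : ℝ | max (0 - x') 0 ^ r = a} (1 : ℝ → ℝ≥0∞) x := by
      intro x
      have hsect : Prod.mk x ⁻¹' (e.symm ⁻¹' E)
          = {y : Fin n → ℝ | ∑ j, max (0 - y j) 0 ^ r = a - max (0 - x) 0 ^ r} := by
        ext y
        simp only [Set.mem_preimage, hE, Set.mem_setOf_eq]
        rw [Fin.sum_univ_succ]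
        have h0 : e.symm (x, y) 0 = x := by
          simp [he, MeasurableEquiv.piFinSuccAbove]
        have hsucc : ∀ i : Fin n, e.symm (x, y) i.succ = y i := by
          intro i
          simp [he, MeasurableEquiv.piFinSuccAbove]
        rw [h0, Finset.sum_congr rfl fun i _ => by rw [hsucc i]]
        constructor
        · intro h; linarith
        · intro h; linarith
      rw [hsect]
      by_cases hx : max (0 - x) 0 ^ r = a
      · rw [Set.indicator_of_mem (by exact hx)]
        rw [hx]
        simpa using prob_le_one
      · rw [Set.indicator_of_notMem (by exact hx)]
        rw [ih (a - max (0 - x) 0 ^ r) (by intro h0; apply hx; linarith)]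
    refine le_antisymm ?_ (zero_le)
    calc ∫⁻ x, (Measure.pi fun _ : Fin n => m) (Prod.mk x ⁻¹' (e.symm ⁻¹' E)) ∂m
        ≤ ∫⁻ x, Set.indicator {x' : ℝ | max (0 - x') 0 ^ r = a} (1 : ℝ → ℝ≥0∞) x ∂m :=
          lintegral_mono hsec
      _ = m {x' : ℝ | max (0 - x') 0 ^ r = a} := by
          rw [lintegral_indicator_one (show MeasurableSet {x' : ℝ | max (0 - x') 0 ^ r = a} from
            (gcont hr.le).measurable (measurableSet_singleton a))]
      _ = 0 := g_levelset_null hr ha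

instance gaussPi_prob (k : ℕ) (μ : Fin k → ℝ) : IsProbabilityMeasure (gaussPi k μ) := by
  unfold gaussPi; infer_instance

lemma gaussPi_zero (k : ℕ) :
    gaussPi k (fun _ => 0) = Measure.pi (fun _ : Fin k => gaussianReal 0 1) := rfl

lemma coord_null {k : ℕ} (j : Fin k) (x0 : ℝ) :
    gaussPi k (fun _ => 0) {z | z j = x0} = 0 := by
  classical
  have hset : {z : Fin k → ℝ | z j = x0}
      = Set.univ.pi (fun i => if i = j then ({x0} : Set ℝ) else Set.univ) := by
    ext z
    simp only [Set.mem_setOf_eq, Set.mem_univ_pi]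
    constructor
    · intro h i
      by_cases hij : i = j
      · subst hij; simp [h]
      · simp [hij]
    · intro h
      have := h j
      simpa using this
  rw [gaussPi_zero, hset, Measure.pi_pi]
  apply Finset.prod_eq_zero (Finset.mem_univ j)
  simp [gr_null]

lemma Scont {k : ℕ} {p : ℝ≥0∞} (hp : 1 ≤ p) (hp' : p ≠ ∞) :
    Continuous fun z : Fin k → ℝ => SpE k p z 0 := by
  have hpt : 0 < p.toReal := lt_of_lt_of_le one_pos (toReal_ge_one hp hp')
  have heq : (fun z : Fin k → ℝ => SpE k p z 0)
      = (fun x : ℝ => x ^ (1/p.toReal)) ∘ (fun z => ∑ j, max (0 - z j) 0 ^ p.toReal) :=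
    funext fun z => SpE_fin hp' z
  rw [heq]
  exact (Real.continuous_rpow_const (by positivity)).comp
    (continuous_finset_sum _ fun j _ => (gcont hpt.le).comp (continuous_apply j))

lemma measSet {k : ℕ} [Nonempty (Fin k)] {p : ℝ≥0∞} (hp : 1 ≤ p) (t : ℝ) :
    MeasurableSet {z : Fin k → ℝ | SpE k p z 0 ≤ t} := by
  by_cases hp' : p = ∞
  · subst hp'
    have hset : {z : Fin k → ℝ | SpE k ⊤ z 0 ≤ t} = ⋂ j, {z | max (0 - z j) 0 ≤ t} := by
      ext z
      simp only [Set.mem_setOf_eq, Set.mem_iInter, SpE_inf]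
      exact ciSup_le_iff (Set.Finite.bddAbove (Set.finite_range _))
    rw [hset]
    exact MeasurableSet.iInter fun j =>
      (((continuous_const.sub (continuous_apply j)).max continuous_const).measurable
        measurableSet_Iic)
  · exact (Scont hp hp').measurable measurableSet_Iic

lemma SpE_levelset_null {k : ℕ} [Nonempty (Fin k)] {p : ℝ≥0∞} (hp : 1 ≤ p) {c : ℝ}
    (hc : 0 < c) : gaussPi k (fun _ => 0) {z | SpE k p z 0 = c} = 0 := by
  by_cases hp' : p = ∞
  · subst hp'
    refine measure_mono_null ?_ (measure_iUnion_null fun j => coord_null j (-c))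
    intro z hz
    rw [Set.mem_setOf_eq, SpE_inf] at hz
    have hne : (Finset.univ : Finset (Fin k)).Nonempty := Finset.univ_nonempty
    obtain ⟨j, -, hj⟩ := Finset.exists_mem_eq_sup' hne fun j => max (0 - z j) 0
    rw [Finset.sup'_univ_eq_ciSup, hz] at hj
    have hzj : 0 - z j = c := by
      rcases le_or_gt (0 - z j) 0 with h | h
      · rw [max_eq_right h] at hj; linarith
      · rw [max_eq_left h.le] at hj; exact hj.symm
    exact Set.mem_iUnion.2 ⟨j, show z j = -c by linarith⟩
  · have hpt : 0 < p.toReal := lt_of_lt_of_le one_pos (toReal_ge_one hp hp')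
    have hset : {z : Fin k → ℝ | SpE k p z 0 = c}
        = {z | ∑ j, max (0 - z j) 0 ^ p.toReal = c ^ p.toReal} := by
      ext z
      simp only [Set.mem_setOf_eq, SpE_fin hp']
      constructor
      · intro h
        rw [← h, one_div, Real.rpow_inv_rpow (sum_pow_nonneg z _) hpt.ne']
      · intro h
        rw [h, one_div, Real.rpow_rpow_inv hc.le hpt.ne']
    rw [gaussPi_zero, hset]
    exact sumNull hpt k (c ^ p.toReal) (Real.rpow_pos_of_pos hc _).ne'

noncomputable def Fcdf (k : ℕ) (p : ℝ≥0∞) (t : ℝ) : ℝ :=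
  ((gaussPi k (fun _ => 0)) {z | SpE k p z 0 ≤ t}).toReal

lemma Fcdf_mono {k : ℕ} {p : ℝ≥0∞} : Monotone (Fcdf k p) := by
  intro s t hst
  exact ENNReal.toReal_mono (measure_ne_top _ _)
    (measure_mono fun z hz => le_trans hz hst)

lemma Fcdf_tendsto_right {k : ℕ} [Nonempty (Fin k)] {p : ℝ≥0∞} (hp : 1 ≤ p) (t : ℝ) :
    Filter.Tendsto (fun n : ℕ => Fcdf k p (t + 1/(n+1))) Filter.atTop
      (nhds (Fcdf k p t)) := by
  have hiInter : ⋂ n : ℕ, {z : Fin k → ℝ | SpE k p z 0 ≤ t + 1/(n+1)}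
      = {z | SpE k p z 0 ≤ t} := by
    ext z
    simp only [Set.mem_iInter, Set.mem_setOf_eq]
    constructor
    · intro h
      by_contra hcon
      push_neg at hcon
      obtain ⟨n, hn⟩ := exists_nat_one_div_lt (sub_pos.2 hcon)
      have := h n
      linarith
    · intro h n
      have hpos : (0:ℝ) < 1/(n+1) := by positivity
      linarith
  have hanti : Antitone fun n : ℕ => {z : Fin k → ℝ | SpE k p z 0 ≤ t + 1/(n+1)} := by
    intro a b hab z hz
    simp only [Set.mem_setOf_eq] at hz ⊢
    have h1 : (1:ℝ)/(b+1) ≤ 1/(a+1) := by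
      apply one_div_le_one_div_of_le (by positivity)
      have : (a:ℝ) ≤ b := by exact_mod_cast hab
      linarith
    linarith
  have htend := tendsto_measure_iInter_atTop (μ := gaussPi k fun _ => 0)
    (fun n => (measSet hp _).nullMeasurableSet) hanti ⟨0, measure_ne_top _ _⟩
  rw [hiInter] at htend
  exact (ENNReal.tendsto_toReal (measure_ne_top _ _)).comp htend

lemma Fcdf_tendsto_left {k : ℕ} {p : ℝ≥0∞} {c : ℝ} :
    Filter.Tendsto (fun n : ℕ => Fcdf k p (c - 1/(n+1))) Filter.atTop
      (nhds (((gaussPi k (fun _ => 0)) {z | SpE k p z 0 < c}).toReal)) := by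
  have hiUnion : ⋃ n : ℕ, {z : Fin k → ℝ | SpE k p z 0 ≤ c - 1/(n+1)}
      = {z | SpE k p z 0 < c} := by
    ext z
    simp only [Set.mem_iUnion, Set.mem_setOf_eq]
    constructor
    · rintro ⟨n, hn⟩
      have hpos : (0:ℝ) < 1/(n+1) := by positivity
      linarith
    · intro h
      obtain ⟨n, hn⟩ := exists_nat_one_div_lt (sub_pos.2 h)
      exact ⟨n, by linarith⟩
  have hmono : Monotone fun n : ℕ => {z : Fin k → ℝ | SpE k p z 0 ≤ c - 1/(n+1)} := by
    intro a b hab z hz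
    simp only [Set.mem_setOf_eq] at hz ⊢
    have h1 : (1:ℝ)/(b+1) ≤ 1/(a+1) := by
      apply one_div_le_one_div_of_le (by positivity)
      have : (a:ℝ) ≤ b := by exact_mod_cast hab
      linarith
    linarith
  have htend := tendsto_measure_iUnion_atTop (μ := gaussPi k fun _ => 0) hmono
  rw [hiUnion] at htend
  exact (ENNReal.tendsto_toReal (measure_ne_top _ _)).comp htend

lemma Fcdf_tendsto_atTop {k : ℕ} {p : ℝ≥0∞} :
    Filter.Tendsto (fun n : ℕ => Fcdf k p n) Filter.atTop (nhds 1) := by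
  have hiUnion : ⋃ n : ℕ, {z : Fin k → ℝ | SpE k p z 0 ≤ n} = Set.univ := by
    ext z
    simp only [Set.mem_iUnion, Set.mem_setOf_eq, Set.mem_univ, iff_true]
    obtain ⟨n, hn⟩ := exists_nat_gt (SpE k p z 0)
    exact ⟨n, hn.le⟩
  have hmono : Monotone fun n : ℕ => {z : Fin k → ℝ | SpE k p z 0 ≤ n} := by
    intro a b hab z hz
    simp only [Set.mem_setOf_eq] at hz ⊢
    have : (a:ℝ) ≤ b := by exact_mod_cast hab
    linarith
  have htend := tendsto_measure_iUnion_atTop (μ := gaussPi k fun _ => 0) hmono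
  rw [hiUnion, measure_univ] at htend
  have := (ENNReal.tendsto_toReal (by norm_num : (1:ℝ≥0∞) ≠ ⊤)).comp htend
  simpa [Fcdf, Function.comp_def] using this

lemma Fcdf_zero {k : ℕ} [Nonempty (Fin k)] {p : ℝ≥0∞} (hp : 1 ≤ p) :
    Fcdf k p 0 = (1/2:ℝ)^k := by
  have hset : {z : Fin k → ℝ | SpE k p z 0 ≤ 0}
      = Set.univ.pi (fun _ => Set.Ici (0:ℝ)) := by
    ext z
    simp only [Set.mem_setOf_eq, Set.mem_univ_pi, Set.mem_Ici]
    exact SpE_le_zero_iff hp z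
  rw [Fcdf, hset, gaussPi_zero, Measure.pi_pi]
  simp only [gr_Ici_half, Finset.prod_const, Finset.card_univ, Fintype.card_fin]
  rw [ENNReal.toReal_pow]
  norm_num

lemma Tset_facts {k : ℕ} [Nonempty (Fin k)] {p : ℝ≥0∞} (hp : 1 ≤ p) (hk : 2 ≤ k)
    {τ : ℝ} (hτh : 1/2 ≤ τ) (hτ1 : τ < 1) :
    {t : ℝ | τ ≤ Fcdf k p t}.Nonempty ∧ ∃ ε > (0:ℝ), ∀ t ∈ {t : ℝ | τ ≤ Fcdf k p t}, ε < t := by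
  constructor
  · obtain ⟨n, hn⟩ := ((Fcdf_tendsto_atTop (k := k) (p := p)).eventually
      (eventually_gt_nhds hτ1)).exists
    exact ⟨n, hn.le⟩
  · have hF0 : Fcdf k p 0 < τ := by
      rw [Fcdf_zero hp]
      have h2 : (1/2:ℝ)^k ≤ (1/2:ℝ)^2 :=
        pow_le_pow_of_le_one (by norm_num) (by norm_num) hk
      nlinarith
    obtain ⟨n, hn⟩ := ((Fcdf_tendsto_right hp 0).eventually (eventually_lt_nhds hF0)).exists
    refine ⟨1/(n+1), by positivity, fun t ht => ?_⟩
    by_contra hcon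
    push_neg at hcon
    have : Fcdf k p t ≤ Fcdf k p (0 + 1/(n+1)) := Fcdf_mono (by linarith)
    have ht' : τ ≤ Fcdf k p t := ht
    linarith

lemma quantile_lt {k : ℕ} (hk : 2 ≤ k) {τ : ℝ} (hτh : 1/2 ≤ τ) (hτ1 : τ < 1)
    {p q : ℝ≥0∞} (hp : 1 ≤ p) (hpq : p < q) :
    quantile (gaussPi k (fun _ => 0)) (fun z => SpE k q z 0) τ
      < quantile (gaussPi k (fun _ => 0)) (fun z => SpE k p z 0) τ := by
  haveI : Nonempty (Fin k) := ⟨⟨0, by omega⟩⟩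
  have hq1 : 1 ≤ q := hp.trans hpq.le
  have hp' : p ≠ ∞ := hpq.ne_top
  set P := gaussPi k (fun _ => 0) with hP
  set Tq := {t : ℝ | τ ≤ Fcdf k q t} with hTq
  set Tp := {t : ℝ | τ ≤ Fcdf k p t} with hTp
  obtain ⟨hTqne, εq, hεq, hεqmem⟩ := Tset_facts hq1 hk hτh hτ1
  obtain ⟨hTpne, εp, hεp, hεpmem⟩ := Tset_facts hp hk hτh hτ1
  have hTqbdd : BddBelow Tq := ⟨εq, fun t ht => (hεqmem t ht).le⟩
  have hTpbdd : BddBelow Tp := ⟨εp, fun t ht => (hεpmem t ht).le⟩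
  have hquantq : quantile P (fun z => SpE k q z 0) τ = sInf Tq := rfl
  have hquantp : quantile P (fun z => SpE k p z 0) τ = sInf Tp := rfl
  rw [hquantq, hquantp]
  set cq := sInf Tq with hcq
  have hcqpos : 0 < cq := lt_of_lt_of_le hεq (le_csInf hTqne fun t ht => (hεqmem t ht).le)
  -- F_q(cq) ≥ τ
  have hge : τ ≤ Fcdf k q cq := by
    have hstep : ∀ n : ℕ, τ ≤ Fcdf k q (cq + 1/(n+1)) := by
      intro n
      have hlt : sInf Tq < cq + 1/(n+1) := by
        rw [← hcq]
        have hposn : (0:ℝ) < 1/(n+1) := by positivity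
        linarith
      obtain ⟨t, ht, htlt⟩ := exists_lt_of_csInf_lt hTqne hlt
      exact le_trans ht (Fcdf_mono htlt.le)
    exact ge_of_tendsto (Fcdf_tendsto_right hq1 cq) (Filter.Eventually.of_forall hstep)
  -- F_q(cq) ≤ τ
  have hle : Fcdf k q cq ≤ τ := by
    have hleft : ((P {z | SpE k q z 0 < cq}).toReal) ≤ τ := by
      refine le_of_tendsto (Fcdf_tendsto_left (k := k) (p := q) (c := cq))
        (Filter.Eventually.of_forall fun n => ?_)
      by_contra hcon
      push_neg at hcon
      have hmem : cq - 1/(n+1) ∈ Tq := hcon.le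
      have := csInf_le hTqbdd hmem
      rw [← hcq] at this
      have hpos : (0:ℝ) < 1/(n+1) := by positivity
      linarith
    have hnull : P {z | SpE k q z 0 = cq} = 0 := SpE_levelset_null hq1 hcqpos
    have hsplit : P {z | SpE k q z 0 ≤ cq}
        ≤ P {z | SpE k q z 0 < cq} + P {z | SpE k q z 0 = cq} := by
      refine le_trans (measure_mono ?_) (measure_union_le _ _)
      intro z hz
      have hz' : SpE k q z 0 ≤ cq := hz
      rcases lt_or_eq_of_le hz' with h | h
      · exact Or.inl h
      · exact Or.inr h
    rw [hnull, add_zero] at hsplit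
    calc Fcdf k q cq ≤ (P {z | SpE k q z 0 < cq}).toReal :=
          ENNReal.toReal_mono (measure_ne_top _ _) hsplit
      _ ≤ τ := hleft
  have heq : Fcdf k q cq = τ := le_antisymm hle hge
  -- the box
  have hKq : 0 < Kfac k q := Kfac_pos (by omega) q
  have hKp : 0 < Kfac k p := Kfac_pos (by omega) p
  have hKlt : Kfac k q < Kfac k p := Kfac_lt hk hp hpq
  set lo := cq / Kfac k p with hlo
  set hi := cq / Kfac k q with hhi
  have hlopos : 0 < lo := div_pos hcqpos hKp
  have hlohi : lo < hi := div_lt_div_of_pos_left hcqpos hKq hKlt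
  set B := Set.univ.pi (fun _ : Fin k => Set.Ioo (-hi) (-lo)) with hB
  have hBmeas : MeasurableSet B := MeasurableSet.univ_pi fun _ => measurableSet_Ioo
  have hBpos : P B ≠ 0 := by
    rw [hP, gaussPi_zero, hB, Measure.pi_pi]
    rw [Finset.prod_ne_zero_iff]
    exact fun j _ => gr_Ioo_pos (by linarith)
  have hBq : ∀ z ∈ B, SpE k q z 0 ≤ cq := by
    intro z hz
    have hcoord : ∀ j, max (0 - z j) 0 ≤ hi := by
      intro j
      have := (hz j (Set.mem_univ j)).1
      apply max_le (by linarith) (by linarith)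
    have := SpE_le_mul hq1 (by linarith : (0:ℝ) ≤ hi) hcoord
    rwa [hhi, div_mul_cancel₀ cq hKq.ne'] at this
  have hBp : ∀ z ∈ B, cq < SpE k p z 0 := by
    intro z hz
    have hcoord : ∀ j, lo < max (0 - z j) 0 := by
      intro j
      have := (hz j (Set.mem_univ j)).2
      calc lo < 0 - z j := by linarith
        _ ≤ max (0 - z j) 0 := le_max_left _ _
    have := SpE_gt_mul hp hp' hlopos.le hcoord
    rwa [hlo, div_mul_cancel₀ cq hKp.ne'] at this
  -- F_p(cq) < τ
  have hFp : Fcdf k p cq < τ := by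
    have hdisj : Disjoint {z : Fin k → ℝ | SpE k p z 0 ≤ cq} B := by
      rw [Set.disjoint_left]
      intro z hz hzB
      exact absurd hz (not_le.2 (hBp z hzB))
    have hsub : {z : Fin k → ℝ | SpE k p z 0 ≤ cq} ∪ B ⊆ {z | SpE k q z 0 ≤ cq} := by
      intro z hz
      rcases hz with hz | hz
      · exact le_trans (SpE_anti hp hpq z) hz
      · exact hBq z hz
    have hmeas : P {z | SpE k p z 0 ≤ cq} + P B ≤ P {z | SpE k q z 0 ≤ cq} := by
      rw [← measure_union hdisj hBmeas]
      exact measure_mono hsub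
    have htoReal : Fcdf k p cq + (P B).toReal ≤ Fcdf k q cq := by
      rw [Fcdf, Fcdf, ← ENNReal.toReal_add (measure_ne_top _ _) (measure_ne_top _ _)]
      exact ENNReal.toReal_mono (measure_ne_top _ _) hmeas
    have hBpos' : 0 < (P B).toReal := ENNReal.toReal_pos hBpos (measure_ne_top _ _)
    rw [heq] at htoReal
    linarith
  -- conclude
  obtain ⟨n, hn⟩ := ((Fcdf_tendsto_right hp cq).eventually (eventually_lt_nhds hFp)).exists
  have hgap : ∀ t ∈ Tp, cq + 1/(n+1) < t := by
    intro t ht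
    by_contra hcon
    push_neg at hcon
    have : Fcdf k p t ≤ Fcdf k p (cq + 1/(n+1)) := Fcdf_mono hcon
    have ht' : τ ≤ Fcdf k p t := ht
    linarith
  have hfinal : cq + 1/(n+1) ≤ sInf Tp := le_csInf hTpne fun t ht => (hgap t ht).le
  have hpos : (0:ℝ) < 1/(n+1) := by positivity
  linarith

/-- The minimax power `β_{θ₀,p}(b) = 1 - Φ(c_{p,α} - b)` of the `L^p` test is strictly
increasing in `p ∈ [1, ∞]`; in particular (taking `q = ∞`) the sup-statistic test has
strictly greater minimax power than any `L^p` test with `p < ∞`, when `k ≥ 2`. -/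
theorem stmt11 (k : ℕ) (hk : 2 ≤ k) (b α : ℝ) (hb : 0 < b) (hα : 0 < α) (hα2 : α ≤ 1 / 2)
    (p q : ℝ≥0∞) (hp : 1 ≤ p) (hpq : p < q) :
    1 - Phi (quantile (gaussPi k (fun _ => 0)) (fun z => SpE k p z 0) (1 - α) - b)
      < 1 - Phi (quantile (gaussPi k (fun _ => 0)) (fun z => SpE k q z 0) (1 - α) - b) := by
  have hτh : 1/2 ≤ 1 - α := by linarith
  have hτ1 : 1 - α < 1 := by linarith
  have hlt := quantile_lt hk hτh hτ1 hp hpq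
  have := Phi_strictMono (sub_lt_sub_right hlt b)
  linarith
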